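/- Holley–Stroock perturbation lemma (measure-theoretic core): let μ be a probability measure, V a bounded measurable function, and μ̃ = Z^{−1}e^V μ with Z = ∫e^V dμ. If Ent_μ(f²) ≤ c·∫Γ dμ for some nonnegative measurable function Γ (the carré du champ of f) and constant c > 0, then Ent_{μ̃}(f²) ≤ c·e^{osc(V)}·∫Γ dμ̃, where osc(V) = sup V − inf V. -/

import Mathlib

/-!
`Ent_ν(g) = inf_{t > 0} ∫ (g log g - g log t + t - g) dν`, and the integrand is pointwise
nonnegative. Since `dμ̃/dμ = e^V / Z ≤ e^{sup V} / Z`, for `t = ∫ g dμ` this gives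
`Ent_μ̃(g) ≤ ∫ (…) dμ̃ ≤ (e^{sup V} / Z) ∫ (…) dμ = (e^{sup V} / Z) Ent_μ(g)`.
Dually `dμ̃/dμ ≥ e^{inf V} / Z` gives `∫ Γ dμ ≤ (Z / e^{inf V}) ∫ Γ dμ̃`, and the
normalisations `Z` cancel.
-/

open MeasureTheory Real

noncomputable section

def entropy {Ω : Type*} [MeasurableSpace Ω] (ν : Measure Ω) (g : Ω → ℝ) : ℝ :=
  ∫ ω, g ω * log (g ω) ∂ν - (∫ ω, g ω ∂ν) * log (∫ ω, g ω ∂ν)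

def entropyIntegrand (t x : ℝ) : ℝ :=
  x * log x - x * log t + t - x

end

lemma entropyIntegrand_nonneg {t x : ℝ} (ht : 0 < t) (hx : 0 ≤ x) :
    0 ≤ entropyIntegrand t x := by
  unfold entropyIntegrand
  rcases hx.eq_or_lt with rfl | hx
  · simpa using ht.le
  · -- `x * log (t / x) ≤ x * (t / x - 1)`
    have key := mul_le_mul_of_nonneg_left (log_le_sub_one_of_pos (div_pos ht hx)) hx.le
    rw [log_div ht.ne' hx.ne', mul_sub, mul_sub, mul_div_cancel₀ _ hx.ne'] at key
    linarith

section Entropy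

variable {Ω : Type*} [MeasurableSpace Ω] {ν : Measure Ω} {g : Ω → ℝ}

lemma integrable_entropyIntegrand [IsFiniteMeasure ν] (hg : Integrable g ν)
    (hglog : Integrable (fun ω => g ω * log (g ω)) ν) (t : ℝ) :
    Integrable (fun ω => entropyIntegrand t (g ω)) ν :=
  ((hglog.sub (hg.mul_const _)).add (integrable_const t)).sub hg

lemma integral_entropyIntegrand [IsProbabilityMeasure ν] (hg : Integrable g ν)
    (hglog : Integrable (fun ω => g ω * log (g ω)) ν) (t : ℝ) :
    ∫ ω, entropyIntegrand t (g ω) ∂ν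
      = ∫ ω, g ω * log (g ω) ∂ν - (∫ ω, g ω ∂ν) * log t + t - ∫ ω, g ω ∂ν := by
  have hsub : Integrable (fun ω => g ω * log (g ω) - g ω * log t) ν :=
    hglog.sub (hg.mul_const _)
  have hadd : Integrable (fun ω => g ω * log (g ω) - g ω * log t + t) ν :=
    hsub.add (integrable_const t)
  unfold entropyIntegrand
  rw [integral_sub hadd hg, integral_add hsub (integrable_const t),
    integral_sub hglog (hg.mul_const _), integral_mul_const, integral_const]
  simp

lemma entropy_le_integral_entropyIntegrand [IsProbabilityMeasure ν] (hg : Integrable g ν)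
    (hglog : Integrable (fun ω => g ω * log (g ω)) ν) (hg0 : 0 ≤ ∫ ω, g ω ∂ν)
    {t : ℝ} (ht : 0 < t) :
    entropy ν g ≤ ∫ ω, entropyIntegrand t (g ω) ∂ν := by
  have key := entropyIntegrand_nonneg ht hg0
  unfold entropyIntegrand at key
  rw [integral_entropyIntegrand hg hglog, entropy]
  linarith

lemma entropy_eq_integral_entropyIntegrand [IsProbabilityMeasure ν] (hg : Integrable g ν)
    (hglog : Integrable (fun ω => g ω * log (g ω)) ν) :
    entropy ν g = ∫ ω, entropyIntegrand (∫ ω, g ω ∂ν) (g ω) ∂ν := by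
  rw [integral_entropyIntegrand hg hglog, entropy]
  ring

lemma entropy_eq_zero_of_ae_eq_zero (hg : g =ᵐ[ν] 0) : entropy ν g = 0 := by
  have hglog : (fun ω => g ω * log (g ω)) =ᵐ[ν] 0 := hg.mono fun ω hω => by simp [hω]
  simp [entropy, integral_congr_ae hg, integral_congr_ae hglog]

end Entropy

lemma norm_exp_le_of_le {α : Type*} {f : α → ℝ} {M : ℝ} (hM : ∀ a, f a ≤ M) (a : α) :
    ‖exp (f a)‖ ≤ exp M := by
  rw [norm_of_nonneg (exp_pos _).le]
  exact exp_le_exp.2 (hM a)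

section Tilted

variable {Ω : Type*} [MeasurableSpace Ω] {μ : Measure Ω} {f h : Ω → ℝ} {m M : ℝ}

lemma tilted_eq_inv_smul_withDensity (hZ : 0 < ∫ ω, exp (f ω) ∂μ) :
    μ.tilted f = (ENNReal.ofReal (∫ ω, exp (f ω) ∂μ))⁻¹ •
      μ.withDensity (fun ω => ENNReal.ofReal (exp (f ω))) := by
  rw [Measure.tilted, ← ENNReal.ofReal_inv_of_pos hZ,
    ← withDensity_smul' _ _ ENNReal.ofReal_ne_top]
  congr with ω
  simp only [Pi.smul_apply, smul_eq_mul, div_eq_inv_mul]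
  exact ENNReal.ofReal_mul (inv_nonneg.2 hZ.le)

lemma integrable_exp_of_le [IsFiniteMeasure μ] (hf : Measurable f) (hM : ∀ ω, f ω ≤ M) :
    Integrable (fun ω => exp (f ω)) μ :=
  .of_bound hf.exp.aestronglyMeasurable (exp M) (ae_of_all _ (norm_exp_le_of_le hM))

lemma MeasureTheory.Integrable.tilted_of_le [IsFiniteMeasure μ] (hf : Measurable f) (hM : ∀ ω, f ω ≤ M)
    (hh : Integrable h μ) : Integrable h (μ.tilted f) := by
  rw [integrable_tilted_iff (integrable_exp_of_le hf hM)]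
  exact hh.bdd_mul hf.exp.aestronglyMeasurable (ae_of_all _ (norm_exp_le_of_le hM))

lemma integral_tilted_le_mul_integral (hM : ∀ ω, f ω ≤ M) (h0 : ∀ ω, 0 ≤ h ω)
    (hh : Integrable h μ) :
    ∫ ω, h ω ∂μ.tilted f ≤ exp M / (∫ ω, exp (f ω) ∂μ) * ∫ ω, h ω ∂μ := by
  have hZ : 0 ≤ ∫ ω, exp (f ω) ∂μ := integral_nonneg fun ω => (exp_pos _).le
  rw [integral_tilted, ← integral_const_mul]
  refine integral_mono_of_nonneg (ae_of_all _ fun ω => ?_) (hh.const_mul _)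
    (ae_of_all _ fun ω => ?_)
  · exact smul_nonneg (by positivity) (h0 ω)
  · exact mul_le_mul_of_nonneg_right
      (div_le_div_of_nonneg_right (exp_le_exp.2 (hM ω)) hZ) (h0 ω)

lemma mul_integral_le_integral_tilted (hf : Integrable (fun ω => exp (f ω)) μ)
    (hm : ∀ ω, m ≤ f ω) (h0 : ∀ ω, 0 ≤ h ω) (hh : Integrable h (μ.tilted f)) :
    exp m / (∫ ω, exp (f ω) ∂μ) * ∫ ω, h ω ∂μ ≤ ∫ ω, h ω ∂μ.tilted f := by
  have hZ : 0 ≤ ∫ ω, exp (f ω) ∂μ := integral_nonneg fun ω => (exp_pos _).le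
  rw [integrable_tilted_iff hf] at hh
  rw [integral_tilted, ← integral_const_mul]
  refine integral_mono_of_nonneg (ae_of_all _ fun ω => ?_) ?_ (ae_of_all _ fun ω => ?_)
  · exact mul_nonneg (by positivity) (h0 ω)
  · simpa only [smul_eq_mul, div_mul_eq_mul_div] using hh.div_const (∫ ω, exp (f ω) ∂μ)
  · exact mul_le_mul_of_nonneg_right
      (div_le_div_of_nonneg_right (exp_le_exp.2 (hm ω)) hZ) (h0 ω)

theorem entropy_tilted_le [IsProbabilityMeasure μ] {g : Ω → ℝ} (hf : Measurable f)
    (hM : ∀ ω, f ω ≤ M) (hg0 : 0 ≤ g) (hg : Integrable g μ)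
    (hglog : Integrable (fun ω => g ω * log (g ω)) μ) :
    entropy (μ.tilted f) g ≤ exp M / (∫ ω, exp (f ω) ∂μ) * entropy μ g := by
  have := isProbabilityMeasure_tilted (integrable_exp_of_le (μ := μ) hf hM)
  rcases (integral_nonneg hg0).eq_or_lt with hmean | hmean
  · have hzero : g =ᵐ[μ] 0 := (integral_eq_zero_iff_of_nonneg hg0 hg).1 hmean.symm
    rw [entropy_eq_zero_of_ae_eq_zero hzero, mul_zero,
      entropy_eq_zero_of_ae_eq_zero ((tilted_absolutelyContinuous μ f).ae_le hzero)]
  · calc entropy (μ.tilted f) g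
        ≤ ∫ ω, entropyIntegrand (∫ ω, g ω ∂μ) (g ω) ∂μ.tilted f :=
          entropy_le_integral_entropyIntegrand (hg.tilted_of_le hf hM)
            (hglog.tilted_of_le hf hM) (integral_nonneg hg0) hmean
      _ ≤ exp M / (∫ ω, exp (f ω) ∂μ) * ∫ ω, entropyIntegrand (∫ ω, g ω ∂μ) (g ω) ∂μ :=
          integral_tilted_le_mul_integral hM (fun ω => entropyIntegrand_nonneg hmean (hg0 ω))
            (integrable_entropyIntegrand hg hglog _)
      _ = exp M / (∫ ω, exp (f ω) ∂μ) * entropy μ g := by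
          rw [entropy_eq_integral_entropyIntegrand hg hglog]

end Tilted

theorem stmt_16_general {Ω : Type*} [MeasurableSpace Ω] (μ : Measure Ω) [IsProbabilityMeasure μ]
    (V f Γ : Ω → ℝ) (hVmeas : Measurable V)
    (hVbdd : BddAbove (Set.range V)) (hVbdd' : BddBelow (Set.range V))
    (c : ℝ) (hc : 0 < c) (hΓ : ∀ ω, 0 ≤ Γ ω)
    (μt : Measure Ω)
    (hμt : μt = (ENNReal.ofReal (∫ ω, Real.exp (V ω) ∂μ))⁻¹ •
      μ.withDensity (fun ω => ENNReal.ofReal (Real.exp (V ω))))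
    (hf1 : Integrable (fun ω => f ω ^ 2) μ)
    (hf2 : Integrable (fun ω => f ω ^ 2 * Real.log (f ω ^ 2)) μ)
    (hΓ1' : Integrable Γ μt)
    (hLS : (∫ ω, f ω ^ 2 * Real.log (f ω ^ 2) ∂μ)
        - (∫ ω, f ω ^ 2 ∂μ) * Real.log (∫ ω, f ω ^ 2 ∂μ) ≤ c * ∫ ω, Γ ω ∂μ) :
    (∫ ω, f ω ^ 2 * Real.log (f ω ^ 2) ∂μt)
        - (∫ ω, f ω ^ 2 ∂μt) * Real.log (∫ ω, f ω ^ 2 ∂μt) ≤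
      c * Real.exp (sSup (Set.range V) - sInf (Set.range V)) * ∫ ω, Γ ω ∂μt := by
  set M := sSup (Set.range V)
  set m := sInf (Set.range V)
  have hVM : ∀ ω, V ω ≤ M := fun ω => le_csSup hVbdd ⟨ω, rfl⟩
  have hmV : ∀ ω, m ≤ V ω := fun ω => csInf_le hVbdd' ⟨ω, rfl⟩
  have hexp := integrable_exp_of_le (μ := μ) hVmeas hVM
  have hZ : 0 < ∫ ω, exp (V ω) ∂μ := integral_exp_pos hexp
  rw [← tilted_eq_inv_smul_withDensity hZ] at hμt
  subst hμt
  calc entropy (μ.tilted V) (fun ω => f ω ^ 2)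
      ≤ exp M / (∫ ω, exp (V ω) ∂μ) * entropy μ (fun ω => f ω ^ 2) :=
        entropy_tilted_le hVmeas hVM (fun ω => sq_nonneg _) hf1 hf2
    _ ≤ exp M / (∫ ω, exp (V ω) ∂μ) * (c * ∫ ω, Γ ω ∂μ) := by gcongr; exact hLS
    _ = c * exp (M - m) * (exp m / (∫ ω, exp (V ω) ∂μ) * ∫ ω, Γ ω ∂μ) := by
        rw [exp_sub]; field_simp
    _ ≤ c * exp (M - m) * ∫ ω, Γ ω ∂μ.tilted V := by
        gcongr; exact mul_integral_le_integral_tilted hexp hmV hΓ hΓ1'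

/-- Holley–Stroock perturbation lemma (measure-theoretic core). -/
theorem stmt_16 {Ω : Type*} [MeasurableSpace Ω] (μ : Measure Ω) [IsProbabilityMeasure μ]
    (V f Γ : Ω → ℝ) (hVmeas : Measurable V)
    (hVbdd : BddAbove (Set.range V)) (hVbdd' : BddBelow (Set.range V))
    (c : ℝ) (hc : 0 < c) (hΓ : ∀ ω, 0 ≤ Γ ω)
    (μt : Measure Ω)
    (hμt : μt = (ENNReal.ofReal (∫ ω, Real.exp (V ω) ∂μ))⁻¹ •
      μ.withDensity (fun ω => ENNReal.ofReal (Real.exp (V ω))))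
    (hf1 : Integrable (fun ω => f ω ^ 2) μ)
    (hf2 : Integrable (fun ω => f ω ^ 2 * Real.log (f ω ^ 2)) μ)
    (hf1' : Integrable (fun ω => f ω ^ 2) μt)
    (hf2' : Integrable (fun ω => f ω ^ 2 * Real.log (f ω ^ 2)) μt)
    (hΓ1 : Integrable Γ μ) (hΓ1' : Integrable Γ μt)
    (hLS : (∫ ω, f ω ^ 2 * Real.log (f ω ^ 2) ∂μ)
        - (∫ ω, f ω ^ 2 ∂μ) * Real.log (∫ ω, f ω ^ 2 ∂μ) ≤ c * ∫ ω, Γ ω ∂μ) :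
    (∫ ω, f ω ^ 2 * Real.log (f ω ^ 2) ∂μt)
        - (∫ ω, f ω ^ 2 ∂μt) * Real.log (∫ ω, f ω ^ 2 ∂μt) ≤
      c * Real.exp (sSup (Set.range V) - sInf (Set.range V)) * ∫ ω, Γ ω ∂μt :=
  stmt_16_general μ V f Γ hVmeas hVbdd hVbdd' c hc hΓ μt hμt hf1 hf2 hΓ1' hLS
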